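/- arXiv:1307.4471 — 2 statements merged into one kernel-verified Lean document; each statement's English description precedes it below -/
import Mathlib

section
/- Let u and u' be nodes of the pruned run DAG G' with (u,u') ∈ E'. Then the profile of u' is obtained from the profile of u by appending one letter: h_{u'} = h_u·0 or h_{u'} = h_u·1. -/
/-!
Profile trees for Büchi determinization (Fisman–Kupferman–Vardi–Wilke style profiles).
Common definitions: nondeterministic Büchi word automata (NBW), the run DAG `G`,
profiles of nodes, and the pruned run DAG `G'`.
-/

/-- A nondeterministic Büchi word automaton `A = (Alph, Q, Qin, ρ, F)` with `Qin ∩ F = ∅`. -/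
structure NBW (Alph Q : Type*) where
  Qin : Set Q
  ρ : Q → Alph → Set Q
  F : Set Q
  disj : Qin ∩ F = ∅

variable {Alph Q : Type*} (A : NBW Alph Q) (w : ℕ → Alph)

/-- Lexicographic order `L₁ ≤ L₂` on profiles (lists over ℕ). -/
def lexLE (L₁ L₂ : List ℕ) : Prop :=
  List.Lex (· < ·) L₁ L₂ ∨ L₁ = L₂

/-- Strict lexicographic order `L₁ < L₂` on profiles. -/
def lexLT (L₁ L₂ : List ℕ) : Prop :=
  List.Lex (· < ·) L₁ L₂

open Classical in
/-- The profiles of all finite initial runs of `A` (on `w`) to the node `v = (q, i)`: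
for each run `p₀,…,p_i` with `p₀ ∈ Qin`, `p_{j+1} ∈ ρ(p_j, w_j)` and `p_i = q`, the
sequence of `F`-visitation labels `f(p₀,0) ⋯ f(p_i,i)` (where `f` is 1 on `F`-nodes, else 0). -/
def runProfiles (v : Q × ℕ) : Set (List ℕ) :=
  { L | ∃ p : ℕ → Q, p 0 ∈ A.Qin ∧ (∀ j < v.2, p (j + 1) ∈ A.ρ (p j) (w j)) ∧
        p v.2 = v.1 ∧ L = (List.range (v.2 + 1)).map (fun j => if p j ∈ A.F then 1 else 0) }

/-- `v` is a node of the run DAG `G = (V, E)` (equivalently of the pruned DAG `G'`):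
there is a finite run of `A` to `v.1` on `w₀ ⋯ w_{v.2 - 1}`. -/
def memV (v : Q × ℕ) : Prop := (runProfiles A w v).Nonempty

/-- `L` is the lexicographically maximal profile among all initial paths to `v`. -/
def IsMaxProfile (v : Q × ℕ) (L : List ℕ) : Prop :=
  L ∈ runProfiles A w v ∧ ∀ L' ∈ runProfiles A w v, lexLE L' L

open Classical in
/-- The profile `h_v` of a node `v`: the lexicographically maximal profile of an
initial path to `v` (junk value `[]` if `v` is not a node of the DAG). -/
noncomputable def profile (v : Q × ℕ) : List ℕ :=
  if h : ∃ L, IsMaxProfile A w v L then h.choose else []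

/-- The edge relation `E` of the run DAG `G`: `E((q,i), (q',i+1))` iff `(q,i) ∈ V`
and `q' ∈ ρ(q, w_i)`. -/
def edgeG (u v : Q × ℕ) : Prop :=
  memV A w u ∧ v.2 = u.2 + 1 ∧ v.1 ∈ A.ρ u.1 (w u.2)

/-- The edge relation `E'` of the pruned run DAG `G'`: `(u,v) ∈ E` and every
`E`-parent `u'` of `v` satisfies `h_{u'} ≤ h_u`. -/
def edgeG' (u v : Q × ℕ) : Prop :=
  edgeG A w u v ∧ ∀ u', edgeG A w u' v → lexLE (profile A w u') (profile A w u)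


/-!
Every initial path to `v = (q, i + 1)` passes through some `E`-parent `x` of `v`, so the
profiles of `v` are exactly the profiles `L ++ [f v]` with `L` a profile of such a parent.
Along an `E'`-edge `(u, v)` the node `u` has the largest profile `h_u` among these parents,
and appending a common letter to lists of equal length preserves the lexicographic order,
so `h_u ++ [f v]` is the maximal profile of `v`.
-/

theorem List.Lex.append_of_length_eq {α : Type*} {r : α → α → Prop} {l₁ l₂ : List α}
    (h : List.Lex r l₁ l₂) (hlen : l₁.length = l₂.length) (s t : List α) :
    List.Lex r (l₁ ++ s) (l₂ ++ t) := by
  induction h with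
  | nil => simp at hlen
  | cons _ ih => exact .cons (ih (by simpa using hlen))
  | rel hab => exact .rel hab

theorem List.append_le_append_of_length_eq {α : Type*} [LinearOrder α] {l₁ l₂ : List α}
    (h : l₁ ≤ l₂) (hlen : l₁.length = l₂.length) (s : List α) : l₁ ++ s ≤ l₂ ++ s := by
  rcases le_iff_lt_or_eq.mp h with hlt | rfl
  · exact le_of_lt (List.Lex.append_of_length_eq hlt hlen s s)
  · exact le_rfl

theorem lexLE_iff_le {L₁ L₂ : List ℕ} : lexLE L₁ L₂ ↔ L₁ ≤ L₂ :=
  (le_iff_lt_or_eq (a := L₁) (b := L₂)).symm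

open Classical in
noncomputable def fVal (q : Q) : ℕ := if q ∈ A.F then 1 else 0

theorem length_of_mem_runProfiles {v : Q × ℕ} {L : List ℕ} (hL : L ∈ runProfiles A w v) :
    L.length = v.2 + 1 := by
  obtain ⟨p, -, -, -, rfl⟩ := hL
  simp

open Classical in
theorem runProfiles_finite (v : Q × ℕ) : (runProfiles A w v).Finite := by
  refine ((List.finite_length_eq Bool (v.2 + 1)).image
    (List.map fun b => if b then 1 else 0)).subset ?_
  rintro L ⟨p, -, -, -, rfl⟩
  refine ⟨(List.range (v.2 + 1)).map fun j => decide (p j ∈ A.F), by simp, ?_⟩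
  simp only [List.map_map]
  exact List.map_congr_left fun j _ => by by_cases hj : p j ∈ A.F <;> simp [hj]

theorem exists_isMaxProfile {v : Q × ℕ} (hv : memV A w v) : ∃ L, IsMaxProfile A w v L := by
  obtain ⟨L, hL, hmax⟩ := (runProfiles_finite A w v).exists_maximal hv
  refine ⟨L, hL, fun L' hL' => lexLE_iff_le.mpr ?_⟩
  rcases le_total L' L with hle | hle
  · exact hle
  · exact hmax hL' hle

theorem IsMaxProfile.unique {v : Q × ℕ} {L L' : List ℕ}
    (h : IsMaxProfile A w v L) (h' : IsMaxProfile A w v L') : L = L' :=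
  le_antisymm (lexLE_iff_le.mp (h'.2 L h.1)) (lexLE_iff_le.mp (h.2 L' h'.1))

theorem isMaxProfile_profile {v : Q × ℕ} (hv : memV A w v) :
    IsMaxProfile A w v (profile A w v) := by
  have h := exists_isMaxProfile A w hv
  rw [profile, dif_pos h]
  exact h.choose_spec

theorem append_fVal_mem_runProfiles {u v : Q × ℕ} {L : List ℕ} (hL : L ∈ runProfiles A w u)
    (hv : v.2 = u.2 + 1) (hρ : v.1 ∈ A.ρ u.1 (w u.2)) :
    L ++ [fVal A v.1] ∈ runProfiles A w v := by
  obtain ⟨p, h0, hstep, hend, rfl⟩ := hL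
  have hp : ∀ j ≤ u.2, Function.update p (u.2 + 1) v.1 j = p j := fun j hj =>
    Function.update_of_ne (by omega) _ _
  refine ⟨Function.update p (u.2 + 1) v.1, by rwa [hp 0 (Nat.zero_le _)], ?_, ?_, ?_⟩
  · intro j hj
    rw [hp j (by omega)]
    rcases Nat.lt_or_ge j u.2 with hlt | hge
    · rw [hp (j + 1) hlt]
      exact hstep j hlt
    · obtain rfl : j = u.2 := by omega
      rw [Function.update_self, hend]
      exact hρ
  · rw [hv, Function.update_self]
  · show _ = (List.range (v.2 + 1)).map fun j => fVal A (Function.update p (u.2 + 1) v.1 j)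
    rw [hv, List.range_succ (n := u.2 + 1), List.map_append, List.map_singleton,
      Function.update_self]
    refine congrArg (· ++ _) (List.map_congr_left fun j hj => ?_)
    rw [hp j (Nat.lt_succ_iff.mp (List.mem_range.mp hj))]
    rfl

theorem exists_edgeG_of_mem_runProfiles {v : Q × ℕ} {i : ℕ} (hv : v.2 = i + 1) {L : List ℕ}
    (hL : L ∈ runProfiles A w v) :
    ∃ x, edgeG A w x v ∧ ∃ L' ∈ runProfiles A w x, L = L' ++ [fVal A v.1] := by
  obtain ⟨p, h0, hstep, hend, rfl⟩ := hL
  rw [hv] at hstep hend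
  have hprefix : (List.range (i + 1)).map (fun j => fVal A (p j)) ∈ runProfiles A w (p i, i) :=
    ⟨p, h0, fun j hj => hstep j (by omega), rfl, rfl⟩
  refine ⟨(p i, i), ⟨⟨_, hprefix⟩, hv, hend ▸ hstep i (by omega)⟩, _, hprefix, ?_⟩
  rw [hv, List.range_succ, List.map_append, List.map_singleton, hend]
  rfl

theorem isMaxProfile_append_fVal_of_edgeG' {u v : Q × ℕ} (h : edgeG' A w u v) :
    IsMaxProfile A w v (profile A w u ++ [fVal A v.1]) := by
  obtain ⟨⟨hu, hv, hρ⟩, hparents⟩ := h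
  have hmaxu := isMaxProfile_profile A w hu
  refine ⟨append_fVal_mem_runProfiles A w hmaxu.1 hv hρ, fun L hL => ?_⟩
  obtain ⟨x, hx, L', hL', rfl⟩ := exists_edgeG_of_mem_runProfiles A w hv hL
  have hL'x : L' ≤ profile A w x :=
    lexLE_iff_le.mp ((isMaxProfile_profile A w ⟨L', hL'⟩).2 L' hL')
  have hxu : profile A w x ≤ profile A w u := lexLE_iff_le.mp (hparents x hx)
  have hlen : L'.length = (profile A w u).length := by
    rw [length_of_mem_runProfiles A w hL', length_of_mem_runProfiles A w hmaxu.1]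
    have := hx.2.1
    omega
  exact lexLE_iff_le.mpr (List.append_le_append_of_length_eq (hL'x.trans hxu) hlen _)

theorem profile_succ_of_edgeG'_general
    (A : NBW Alph Q) (w : ℕ → Alph) (u u' : Q × ℕ)
    (h : edgeG' A w u u') :
    profile A w u' = profile A w u ++ [0] ∨ profile A w u' = profile A w u ++ [1] := by
  have hmax := isMaxProfile_append_fVal_of_edgeG' A w h
  rw [(isMaxProfile_profile A w ⟨_, hmax.1⟩).unique A w hmax]
  by_cases hF : u'.1 ∈ A.F <;> simp [fVal, hF]

/-- Lemma: profiles grow by one letter along `E'`.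
If `u` and `u'` are nodes of the pruned run DAG `G'` and `(u, u') ∈ E'`, then
`h_{u'} = h_u·0` or `h_{u'} = h_u·1`. -/
theorem profile_succ_of_edgeG' [Fintype Alph] [Fintype Q]
    (A : NBW Alph Q) (w : ℕ → Alph) (u u' : Q × ℕ)
    (hu : memV A w u) (hu' : memV A w u') (h : edgeG' A w u u') :
    profile A w u' = profile A w u ++ [0] ∨ profile A w u' = profile A w u ++ [1] :=
  profile_succ_of_edgeG'_general A w u u' h
end

section
/- Every class U of the profile tree T is a descendant of first(gl(U)), the first class carrying U's global label. -/
variable {Alph Q : Type*} (A : NBW Alph Q) (w : ℕ → Alph)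

/-- The equivalence class (under equality of profiles, levelwise) of a node `u` of `G'`. -/
def classOf (u : Q × ℕ) : Set (Q × ℕ) :=
  { v | memV A w v ∧ v.2 = u.2 ∧ profile A w v = profile A w u }

/-- `C` is a class (node) of the profile tree `T` on level `i`. -/
def ClassAt (C : Set (Q × ℕ)) (i : ℕ) : Prop :=
  ∃ u, memV A w u ∧ u.2 = i ∧ C = classOf A w u

/-- The child relation of the profile tree `T`: `[v]` is a child of `[u]`
whenever `(u, v) ∈ E'`. -/
def childC (C D : Set (Q × ℕ)) : Prop :=
  ∃ u v, edgeG' A w u v ∧ memV A w v ∧ C = classOf A w u ∧ D = classOf A w v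

/-- `D` is a descendant of `C` in `T`: there is a (possibly empty) path from `C` to `D`. -/
def DescC : Set (Q × ℕ) → Set (Q × ℕ) → Prop := Relation.ReflTransGen (childC A w)

/-- `C` is an `F`-class: all its members are `F`-nodes. -/
def IsFClass (C : Set (Q × ℕ)) : Prop := ∀ v ∈ C, v.1 ∈ A.F

/-- `h_C ≤ h_D` for classes `C`, `D` (members of a class all share one profile). -/
def profLE (C D : Set (Q × ℕ)) : Prop :=
  ∀ u ∈ C, ∀ v ∈ D, lexLE (profile A w u) (profile A w v)

/-- `h_C < h_D` for classes `C`, `D`. -/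
def profLT (C D : Set (Q × ℕ)) : Prop :=
  ∀ u ∈ C, ∀ v ∈ D, lexLT (profile A w u) (profile A w v)

/-- `C` (a class on level `i`) is before `D` (a class on level `j`):
`i < j`, or `i = j` and `h_C < h_D`. -/
def BeforeC (C : Set (Q × ℕ)) (i : ℕ) (D : Set (Q × ℕ)) (j : ℕ) : Prop :=
  i < j ∨ (i = j ∧ profLT A w C D)

/-- `C` (on level `i`) is `first(m)` for the labeling `gl`: the first class
(in the `before` order) labeled `m`. -/
def IsFirst (gl : Set (Q × ℕ) → ℕ) (m : ℕ) (C : Set (Q × ℕ)) (i : ℕ) : Prop :=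
  ClassAt A w C i ∧ gl C = m ∧
    ∀ D j, ClassAt A w D j → gl D = m → ¬ BeforeC A w D j C i

/-- `C` is a descendant of `first(m)` (for the labeling `gl`). -/
def DescFirst (gl : Set (Q × ℕ) → ℕ) (m : ℕ) (C : Set (Q × ℕ)) : Prop :=
  ∃ Fm j, IsFirst A w gl m Fm j ∧ DescC A w Fm C

/-- `C = lmd(m, i)` for the labeling `gl`: `C` is the class of lexicographically
minimal profile among the descendants of `first(m)` on level `i`. -/
def IsLmd (gl : Set (Q × ℕ) → ℕ) (m i : ℕ) (C : Set (Q × ℕ)) : Prop :=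
  ClassAt A w C i ∧ DescFirst A w gl m C ∧
    ∀ D, ClassAt A w D i → DescFirst A w gl m D → profLE A w C D

/-- `gl` is the global labeling of the profile tree `T`:
`gl(U₀) = 0` for the level-0 class; for every class `U` on level `i`,
if `labels(U) = {m ∣ U = lmd(m,i)}` is nonempty then `gl(U) = min(labels(U))`,
and otherwise `gl(U) = 1 + max{gl(W) ∣ W before U}`. -/
def GlSpec (gl : Set (Q × ℕ) → ℕ) : Prop :=
  (∀ C, ClassAt A w C 0 → gl C = 0) ∧
  ∀ C i, ClassAt A w C i →
    ((∃ m, IsLmd A w gl m i C) →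
        IsLmd A w gl (gl C) i C ∧ ∀ m, IsLmd A w gl m i C → gl C ≤ m) ∧
    ((¬ ∃ m, IsLmd A w gl m i C) →
        (∃ D j, ClassAt A w D j ∧ BeforeC A w D j C i ∧ gl C = gl D + 1) ∧
        ∀ D j, ClassAt A w D j → BeforeC A w D j C i → gl D < gl C)

variable {A w} {gl : Set (Q × ℕ) → ℕ}

theorem GlSpec.descFirst_of_isLmd (hgl : GlSpec A w gl) {U : Set (Q × ℕ)} {i : ℕ}
    (hU : ClassAt A w U i) (h : ∃ m, IsLmd A w gl m i U) : DescFirst A w gl (gl U) U :=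
  ((hgl.2 U i hU).1 h).1.2.1

/-- A class carrying no `lmd` label gets a fresh label, larger than that of every earlier class,
so it is itself the first class with that label. -/
theorem GlSpec.isFirst_of_not_isLmd (hgl : GlSpec A w gl) {U : Set (Q × ℕ)} {i : ℕ}
    (hU : ClassAt A w U i) (h : ¬ ∃ m, IsLmd A w gl m i U) : IsFirst A w gl (gl U) U i :=
  ⟨hU, rfl, fun D j hD hglD hBefore =>
    (((hgl.2 U i hU).2 h).2 D j hD hBefore).ne hglD⟩

theorem descendant_of_first_general
    (A : NBW Alph Q) (w : ℕ → Alph) (gl : Set (Q × ℕ) → ℕ) (hgl : GlSpec A w gl)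
    (i : ℕ) (U : Set (Q × ℕ)) (hU : ClassAt A w U i) :
    ∃ Fm j, IsFirst A w gl (gl U) Fm j ∧ DescC A w Fm U := by
  by_cases h : ∃ m, IsLmd A w gl m i U
  · exact hgl.descFirst_of_isLmd hU h
  · exact ⟨U, i, hgl.isFirst_of_not_isLmd hU h, .refl⟩

/-- every class `U` is a descendant of `first(gl(U))`. -/
theorem descendant_of_first [Fintype Alph] [Fintype Q]
    (A : NBW Alph Q) (w : ℕ → Alph) (gl : Set (Q × ℕ) → ℕ) (hgl : GlSpec A w gl)
    (i : ℕ) (U : Set (Q × ℕ)) (hU : ClassAt A w U i) :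
    ∃ Fm j, IsFirst A w gl (gl U) Fm j ∧ DescC A w Fm U :=
  descendant_of_first_general A w gl hgl i U hU
end
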